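/- For every k ∈ ℝ³ with |k| − k₃ > 0, the four vectors ω_pos,±(k) = (a₊(k)h_±(k), ±a₋(k)h_±(k)) and ω_neg,±(k) = (∓a₋(k)h_±(k), a₊(k)h_±(k)) form an orthonormal system in ℂ⁴, where a_±(k) = (1/√2)√(1 ± m/λ(k)) and λ(k) = √(|k|²+m²). -/

import Mathlib

noncomputable def knorm (k₁ k₂ k₃ : ℝ) : ℝ := Real.sqrt (k₁ ^ 2 + k₂ ^ 2 + k₃ ^ 2)

noncomputable def lam3 (m k₁ k₂ k₃ : ℝ) : ℝ := Real.sqrt (knorm k₁ k₂ k₃ ^ 2 + m ^ 2)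

noncomputable def aPlus (m k₁ k₂ k₃ : ℝ) : ℝ :=
  Real.sqrt (1 + m / lam3 m k₁ k₂ k₃) / Real.sqrt 2

noncomputable def aMinus (m k₁ k₂ k₃ : ℝ) : ℝ :=
  Real.sqrt (1 - m / lam3 m k₁ k₂ k₃) / Real.sqrt 2

noncomputable def cfac (k₁ k₂ k₃ : ℝ) : ℂ :=
  (((2 * knorm k₁ k₂ k₃ * (knorm k₁ k₂ k₃ - k₃)) ^ (-(1:ℝ)/2) : ℝ) : ℂ)

noncomputable def hPlus (k₁ k₂ k₃ : ℝ) : Fin 2 → ℂ :=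
  ![cfac k₁ k₂ k₃ * ((k₁ : ℂ) - Complex.I * k₂),
    cfac k₁ k₂ k₃ * ((knorm k₁ k₂ k₃ - k₃ : ℝ) : ℂ)]

noncomputable def hMinus (k₁ k₂ k₃ : ℝ) : Fin 2 → ℂ :=
  ![cfac k₁ k₂ k₃ * ((k₃ - knorm k₁ k₂ k₃ : ℝ) : ℂ),
    cfac k₁ k₂ k₃ * ((k₁ : ℂ) + Complex.I * k₂)]

noncomputable def omegaPos (m k₁ k₂ k₃ : ℝ) (s : Bool) : EuclideanSpace ℂ (Fin 4) :=
  let h := if s then hPlus k₁ k₂ k₃ else hMinus k₁ k₂ k₃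
  let sgn : ℂ := if s then 1 else -1
  (WithLp.equiv 2 (Fin 4 → ℂ)).symm
    ![(aPlus m k₁ k₂ k₃ : ℂ) * h 0, (aPlus m k₁ k₂ k₃ : ℂ) * h 1,
      sgn * (aMinus m k₁ k₂ k₃ : ℂ) * h 0, sgn * (aMinus m k₁ k₂ k₃ : ℂ) * h 1]

noncomputable def omegaNeg (m k₁ k₂ k₃ : ℝ) (s : Bool) : EuclideanSpace ℂ (Fin 4) :=
  let h := if s then hPlus k₁ k₂ k₃ else hMinus k₁ k₂ k₃
  let sgn : ℂ := if s then 1 else -1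
  (WithLp.equiv 2 (Fin 4 → ℂ)).symm
    ![-(sgn * (aMinus m k₁ k₂ k₃ : ℂ) * h 0), -(sgn * (aMinus m k₁ k₂ k₃ : ℂ) * h 1),
      (aPlus m k₁ k₂ k₃ : ℂ) * h 0, (aPlus m k₁ k₂ k₃ : ℂ) * h 1]

/-!
Each `ω` is a Kronecker product `c ⊗ h_±(k)` of a coefficient vector `c ∈ ℂ²` with a helicity
spinor, and inner products factor: `⟪c ⊗ h, c' ⊗ h'⟫ = ⟪c, c'⟫ ⟪h, h'⟫`. The spinors `h_±(k)` are
orthonormal because `k₁² + k₂² + (|k| − k₃)² = 2|k|(|k| − k₃)`, and for a fixed helicity the two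
coefficient vectors `(a₊, ±a₋)` and `(∓a₋, a₊)` are the columns of a rotation, since
`a₊² + a₋² = 1`.
-/

open scoped InnerProductSpace ComplexConjugate

section Kronecker

variable {𝕜 : Type*} [RCLike 𝕜]

def kronVec (c u : EuclideanSpace 𝕜 (Fin 2)) : EuclideanSpace 𝕜 (Fin 4) :=
  WithLp.toLp 2 ![c 0 * u 0, c 0 * u 1, c 1 * u 0, c 1 * u 1]

theorem inner_kronVec (c u d v : EuclideanSpace 𝕜 (Fin 2)) :
    ⟪kronVec c u, kronVec d v⟫_𝕜 = ⟪c, d⟫_𝕜 * ⟪u, v⟫_𝕜 := by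
  simp only [kronVec, PiLp.inner_apply, Fin.sum_univ_four, Fin.sum_univ_two, RCLike.inner_apply,
    Fin.isValue, Matrix.cons_val_zero, Matrix.cons_val_one, Matrix.cons_val, map_mul]
  ring

theorem orthonormal_kronVec {ι κ : Type*} {u : ι → EuclideanSpace 𝕜 (Fin 2)}
    {c : ι → κ → EuclideanSpace 𝕜 (Fin 2)} (hu : Orthonormal 𝕜 u)
    (hc : ∀ i, Orthonormal 𝕜 (c i)) :
    Orthonormal 𝕜 fun p : ι × κ => kronVec (c p.1 p.2) (u p.1) := by
  classical
  rw [orthonormal_iff_ite] at hu ⊢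
  rintro ⟨i, k⟩ ⟨j, l⟩
  rw [inner_kronVec, hu]
  by_cases hij : i = j
  · subst hij
    simp [orthonormal_iff_ite.mp (hc i) k l]
  · simp [hij]

theorem orthonormal_rotation {a b : ℝ} (hab : a ^ 2 + b ^ 2 = 1) :
    Orthonormal 𝕜 ![WithLp.toLp 2 ![(a : 𝕜), b], WithLp.toLp 2 ![-(b : 𝕜), a]] := by
  have h : (a : 𝕜) ^ 2 + (b : 𝕜) ^ 2 = 1 := by exact_mod_cast hab
  rw [orthonormal_iff_ite]
  intro i j
  fin_cases i <;> fin_cases j <;>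
    simp only [Nat.succ_eq_add_one, Nat.reduceAdd, Fin.zero_eta, Fin.mk_one, Fin.isValue,
      Matrix.cons_val_zero, Matrix.cons_val_one, Matrix.cons_val_fin_one, PiLp.inner_apply,
      RCLike.inner_apply, Fin.sum_univ_two, map_neg, RCLike.conj_ofReal, mul_neg, neg_mul,
      neg_neg, zero_ne_one, one_ne_zero, ↓reduceIte] <;>
    first
      | ring1
      | linear_combination h

end Kronecker

theorem Real.rpow_neg_half_sq {x : ℝ} (hx : 0 ≤ x) : (x ^ (-(1 : ℝ) / 2)) ^ 2 = x⁻¹ := by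
  rw [← Real.rpow_natCast, ← Real.rpow_mul hx]
  norm_num [Real.rpow_neg_one]

theorem sqrt_one_add_div_sqrt_two_sq_add {x : ℝ} (hx : |x| ≤ 1) :
    (√(1 + x) / √2) ^ 2 + (√(1 - x) / √2) ^ 2 = 1 := by
  obtain ⟨hx₁, hx₂⟩ := abs_le.mp hx
  rw [div_pow, div_pow, Real.sq_sqrt (show 0 ≤ 1 + x by linarith),
    Real.sq_sqrt (show 0 ≤ 1 - x by linarith), Real.sq_sqrt zero_le_two]
  ring

theorem knorm_sq (k₁ k₂ k₃ : ℝ) : knorm k₁ k₂ k₃ ^ 2 = k₁ ^ 2 + k₂ ^ 2 + k₃ ^ 2 :=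
  Real.sq_sqrt (by positivity)

theorem abs_div_lam3_le_one (m k₁ k₂ k₃ : ℝ) : |m / lam3 m k₁ k₂ k₃| ≤ 1 := by
  have hl : 0 ≤ lam3 m k₁ k₂ k₃ := Real.sqrt_nonneg _
  rw [abs_div, abs_of_nonneg hl]
  exact div_le_one_of_le₀ (Real.abs_le_sqrt (by nlinarith [sq_nonneg (knorm k₁ k₂ k₃)])) hl

theorem aPlus_sq_add_aMinus_sq (m k₁ k₂ k₃ : ℝ) :
    aPlus m k₁ k₂ k₃ ^ 2 + aMinus m k₁ k₂ k₃ ^ 2 = 1 :=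
  sqrt_one_add_div_sqrt_two_sq_add (abs_div_lam3_le_one m k₁ k₂ k₃)

theorem sq_add_sq_add_knorm_sub_sq (k₁ k₂ k₃ : ℝ) :
    k₁ ^ 2 + k₂ ^ 2 + (knorm k₁ k₂ k₃ - k₃) ^ 2 = 2 * knorm k₁ k₂ k₃ * (knorm k₁ k₂ k₃ - k₃) := by
  linear_combination -knorm_sq k₁ k₂ k₃

theorem cfac_sq_mul {k₁ k₂ k₃ : ℝ} (hk : knorm k₁ k₂ k₃ - k₃ > 0) :
    cfac k₁ k₂ k₃ ^ 2 * (2 * knorm k₁ k₂ k₃ * (knorm k₁ k₂ k₃ - k₃) : ℝ) = 1 := by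
  have hn : 0 < knorm k₁ k₂ k₃ := by nlinarith [knorm_sq k₁ k₂ k₃, sq_nonneg k₁, sq_nonneg k₂]
  have hx : 0 < 2 * knorm k₁ k₂ k₃ * (knorm k₁ k₂ k₃ - k₃) := by positivity
  rw [cfac, ← Complex.ofReal_pow, ← Complex.ofReal_mul, Real.rpow_neg_half_sq hx.le,
    inv_mul_cancel₀ hx.ne', Complex.ofReal_one]

noncomputable def helicity (k₁ k₂ k₃ : ℝ) (s : Bool) : EuclideanSpace ℂ (Fin 2) :=
  WithLp.toLp 2 (if s then hPlus k₁ k₂ k₃ else hMinus k₁ k₂ k₃)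

theorem orthonormal_helicity {k₁ k₂ k₃ : ℝ} (hk : knorm k₁ k₂ k₃ - k₃ > 0) :
    Orthonormal ℂ (helicity k₁ k₂ k₃) := by
  have hc := cfac_sq_mul hk
  have hsum := congrArg Complex.ofReal (sq_add_sq_add_knorm_sub_sq k₁ k₂ k₃)
  push_cast at hc hsum
  have hconj : conj (cfac k₁ k₂ k₃) = cfac k₁ k₂ k₃ := Complex.conj_ofReal _
  rw [orthonormal_iff_ite]
  intro s t
  cases s <;> cases t <;>
    simp only [helicity, hPlus, hMinus, Bool.false_eq_true, Bool.true_eq_false, ↓reduceIte,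
      Complex.ofReal_sub, PiLp.inner_apply, RCLike.inner_apply, Fin.sum_univ_two, Fin.isValue,
      Matrix.cons_val_zero, Matrix.cons_val_one, Matrix.cons_val_fin_one, map_mul, map_add, map_sub,
      hconj, Complex.conj_ofReal, Complex.conj_I, neg_mul, sub_neg_eq_add] <;>
    first
      | ring1
      | linear_combination hc + cfac k₁ k₂ k₃ ^ 2 * hsum - cfac k₁ k₂ k₃ ^ 2 * k₂ ^ 2 * Complex.I_sq

theorem omegaPos_eq (m k₁ k₂ k₃ : ℝ) (s : Bool) :
    omegaPos m k₁ k₂ k₃ s =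
      kronVec (WithLp.toLp 2 ![(aPlus m k₁ k₂ k₃ : ℂ),
        ((if s then aMinus m k₁ k₂ k₃ else -aMinus m k₁ k₂ k₃ : ℝ) : ℂ)]) (helicity k₁ k₂ k₃ s) := by
  cases s <;> ext i <;> fin_cases i <;> simp [omegaPos, kronVec, helicity]

theorem omegaNeg_eq (m k₁ k₂ k₃ : ℝ) (s : Bool) :
    omegaNeg m k₁ k₂ k₃ s =
      kronVec (WithLp.toLp 2 ![-((if s then aMinus m k₁ k₂ k₃ else -aMinus m k₁ k₂ k₃ : ℝ) : ℂ),
        (aPlus m k₁ k₂ k₃ : ℂ)]) (helicity k₁ k₂ k₃ s) := by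
  cases s <;> ext i <;> fin_cases i <;> simp [omegaNeg, kronVec, helicity]

theorem stmt14_general (m k₁ k₂ k₃ : ℝ) (hk : knorm k₁ k₂ k₃ - k₃ > 0) :
    Orthonormal ℂ
      ![omegaPos m k₁ k₂ k₃ true, omegaPos m k₁ k₂ k₃ false,
        omegaNeg m k₁ k₂ k₃ true, omegaNeg m k₁ k₂ k₃ false] := by
  have hab := aPlus_sq_add_aMinus_sq m k₁ k₂ k₃
  have hω := orthonormal_kronVec (orthonormal_helicity hk) fun s =>
    orthonormal_rotation (𝕜 := ℂ) (a := aPlus m k₁ k₂ k₃)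
      (b := if s then aMinus m k₁ k₂ k₃ else -aMinus m k₁ k₂ k₃)
      (by split_ifs <;> simpa using hab)
  have he : Function.Injective ![((true, 0) : Bool × Fin 2), (false, 0), (true, 1), (false, 1)] := by
    decide
  convert hω.comp _ he using 1
  ext i : 1
  fin_cases i <;> simp [omegaPos_eq, omegaNeg_eq]

/-- For every `k ∈ ℝ³` with `|k| − k₃ > 0`, the four vectors `ω_pos,±(k)` and
`ω_neg,±(k)` form an orthonormal system in `ℂ⁴`. -/
theorem stmt14 (m k₁ k₂ k₃ : ℝ) (hm : 0 < m) (hk : knorm k₁ k₂ k₃ - k₃ > 0) :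
    Orthonormal ℂ
      ![omegaPos m k₁ k₂ k₃ true, omegaPos m k₁ k₂ k₃ false,
        omegaNeg m k₁ k₂ k₃ true, omegaNeg m k₁ k₂ k₃ false] :=
  stmt14_general m k₁ k₂ k₃ hk
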